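/- arXiv:1405.3874 — 4 statements merged into one kernel-verified Lean document; each statement's English description precedes it below -/
import Mathlib

section
/- Let Ω be a connected open subset of ℂ. Let T_0 be an operator in B_1(Ω) acting on a complex separable Hilbert space H_0, let T_1 be an operator in B_1(Ω) acting on a complex separable Hilbert space H_1, and let S : H_1 → H_0 be an arbitrary bounded linear operator. Then the block operator T = [[T_0, S],[0, T_1]] acting on H_0 ⊕ H_1 belongs to the Cowen-Douglas class B_2(Ω). -/
/-!
Surjectivity of `T₀ - w` gives a linear right inverse `R`, and the shear `(x, y) ↦ (x - R S y, y)`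
turns `T - w` into the diagonal operator `(T₀ - w) ⊕ (T₁ - w)`. Hence `T - w` is onto and its
kernel is the shear of `ker (T₀ - w) × ker (T₁ - w)`, which has dimension `1 + 1 = 2`; in
particular `w` is an eigenvalue of `T`. The closed span of these kernels contains `H₀ ⊕ 0` because
the kernels of `T₀ - w` span a dense subspace of `H₀`; and since every `y ∈ ker (T₁ - w)` is the
second coordinate of a vector of `ker (T - w)`, it contains `0 ⊕ H₁` as well.
-/

noncomputable section

open ContinuousLinearMap
open scoped InnerProductSpace

/-- The Cowen–Douglas class `B_n(Ω)`: `Ω ⊆ σ(T)`, `T - w` is surjective for every `w ∈ Ω`,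
the closed linear span of the kernels `ker (T - w)`, `w ∈ Ω`, is all of `H`, and
`dim ker (T - w) = n` for every `w ∈ Ω`. -/
def CowenDouglas {H : Type*} [NormedAddCommGroup H] [InnerProductSpace ℂ H]
    (n : ℕ) (Ω : Set ℂ) (T : H →L[ℂ] H) : Prop :=
  Ω ⊆ spectrum ℂ T ∧
  (∀ w ∈ Ω, Function.Surjective (T - w • (1 : H →L[ℂ] H))) ∧
  (⨆ w ∈ Ω, LinearMap.ker ((T - w • (1 : H →L[ℂ] H) : H →L[ℂ] H) : H →ₗ[ℂ] H)).topologicalClosure = ⊤ ∧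
  (∀ w ∈ Ω, Module.finrank ℂ (LinearMap.ker ((T - w • (1 : H →L[ℂ] H) : H →L[ℂ] H) : H →ₗ[ℂ] H)) = n)

/-- The block operator `[[T₀, S], [0, T₁]]` acting on the Hilbert space orthogonal direct
sum `H₀ ⊕ H₁` (realized as the `ℓ²`-product `WithLp 2 (H₀ × H₁)`). -/
def blockOp₂ {H₀ H₁ : Type*} [NormedAddCommGroup H₀] [NormedSpace ℂ H₀]
    [NormedAddCommGroup H₁] [NormedSpace ℂ H₁]
    (T₀ : H₀ →L[ℂ] H₀) (S : H₁ →L[ℂ] H₀) (T₁ : H₁ →L[ℂ] H₁) :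
    WithLp 2 (H₀ × H₁) →L[ℂ] WithLp 2 (H₀ × H₁) :=
  ((WithLp.prodContinuousLinearEquiv 2 ℂ H₀ H₁).symm : H₀ × H₁ →L[ℂ] WithLp 2 (H₀ × H₁)) ∘L
    ((T₀ ∘L fst ℂ H₀ H₁ + S ∘L snd ℂ H₀ H₁).prod (T₁ ∘L snd ℂ H₀ H₁)) ∘L
    ((WithLp.prodContinuousLinearEquiv 2 ℂ H₀ H₁) : WithLp 2 (H₀ × H₁) →L[ℂ] H₀ × H₁)

namespace LinearMap

variable {K V₀ V₁ W₀ W₁ : Type*} [Ring K]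
  [AddCommGroup V₀] [Module K V₀] [AddCommGroup V₁] [Module K V₁]
  [AddCommGroup W₀] [Module K W₀] [AddCommGroup W₁] [Module K W₁]

def blockTriangular (A₀ : V₀ →ₗ[K] W₀) (S : V₁ →ₗ[K] W₀) (A₁ : V₁ →ₗ[K] W₁) :
    V₀ × V₁ →ₗ[K] W₀ × W₁ :=
  (A₀.coprod S).prod (A₁ ∘ₗ snd K V₀ V₁)

@[simp]
lemma blockTriangular_apply (A₀ : V₀ →ₗ[K] W₀) (S : V₁ →ₗ[K] W₀) (A₁ : V₁ →ₗ[K] W₁)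
    (z : V₀ × V₁) : blockTriangular A₀ S A₁ z = (A₀ z.1 + S z.2, A₁ z.2) := rfl

lemma blockTriangular_surjective {A₀ : V₀ →ₗ[K] W₀} (S : V₁ →ₗ[K] W₀) {A₁ : V₁ →ₗ[K] W₁}
    (h₀ : Function.Surjective A₀) (h₁ : Function.Surjective A₁) :
    Function.Surjective (blockTriangular A₀ S A₁) := by
  rintro ⟨u, v⟩
  obtain ⟨y, rfl⟩ := h₁ v
  obtain ⟨x, hx⟩ := h₀ (u - S y)
  exact ⟨(x, y), by simp [hx]⟩

def shear (R : W₀ →ₗ[K] V₀) (S : V₁ →ₗ[K] W₀) : (V₀ × V₁) ≃ₗ[K] V₀ × V₁ :=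
  .ofLinearMap ((fst K V₀ V₁ - R ∘ₗ S ∘ₗ snd K V₀ V₁).prod (snd K V₀ V₁))
    ((fst K V₀ V₁ + R ∘ₗ S ∘ₗ snd K V₀ V₁).prod (snd K V₀ V₁))
    (by ext <;> simp) (by ext <;> simp)

@[simp]
lemma shear_apply (R : W₀ →ₗ[K] V₀) (S : V₁ →ₗ[K] W₀) (z : V₀ × V₁) :
    shear R S z = (z.1 - R (S z.2), z.2) := rfl

lemma blockTriangular_comp_shear {A₀ : V₀ →ₗ[K] W₀} {R : W₀ →ₗ[K] V₀} (hR : A₀ ∘ₗ R = id)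
    (S : V₁ →ₗ[K] W₀) (A₁ : V₁ →ₗ[K] W₁) :
    blockTriangular A₀ S A₁ ∘ₗ (shear R S : V₀ × V₁ →ₗ[K] V₀ × V₁) = A₀.prodMap A₁ := by
  ext z <;> simp [← comp_apply A₀ R, hR]

lemma ker_blockTriangular {A₀ : V₀ →ₗ[K] W₀} {R : W₀ →ₗ[K] V₀} (hR : A₀ ∘ₗ R = id)
    (S : V₁ →ₗ[K] W₀) (A₁ : V₁ →ₗ[K] W₁) :
    ker (blockTriangular A₀ S A₁) =
      ((ker A₀).prod (ker A₁)).map (shear R S : V₀ × V₁ →ₗ[K] V₀ × V₁) := by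
  rw [← ker_prodMap, ← blockTriangular_comp_shear hR S A₁, ker_comp,
    Submodule.map_comap_eq_of_surjective (shear R S).surjective]

end LinearMap

section DivisionRing

variable {K V₀ V₁ : Type*} [DivisionRing K]
  [AddCommGroup V₀] [Module K V₀] [AddCommGroup V₁] [Module K V₁]

lemma Submodule.finrank_prod (p : Submodule K V₀) (q : Submodule K V₁)
    [Module.Finite K p] [Module.Finite K q] :
    Module.finrank K (p.prod q) = Module.finrank K p + Module.finrank K q := by
  rw [← p.range_subtype, ← q.range_subtype, ← LinearMap.range_prodMap,
    LinearMap.finrank_range_of_inj (p.injective_subtype.prodMap q.injective_subtype),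
    Module.finrank_prod, p.range_subtype, q.range_subtype]

lemma LinearMap.finrank_ker_blockTriangular {W₀ W₁ : Type*} [AddCommGroup W₀] [Module K W₀]
    [AddCommGroup W₁] [Module K W₁] {A₀ : V₀ →ₗ[K] W₀} (S : V₁ →ₗ[K] W₀) (A₁ : V₁ →ₗ[K] W₁)
    [Module.Finite K (ker A₀)] [Module.Finite K (ker A₁)] (h₀ : Function.Surjective A₀) :
    Module.finrank K (ker (blockTriangular A₀ S A₁)) =
      Module.finrank K (ker A₀) + Module.finrank K (ker A₁) := by
  obtain ⟨R, hR⟩ := A₀.exists_rightInverse_of_surjective (range_eq_top.mpr h₀)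
  rw [ker_blockTriangular hR, LinearEquiv.finrank_map_eq, Submodule.finrank_prod]

end DivisionRing

section Density

variable {K E V₀ V₁ ι : Type*} [Ring K]
  [AddCommGroup E] [Module K E] [TopologicalSpace E] [ContinuousAdd E] [ContinuousConstSMul K E]
  [AddCommGroup V₀] [Module K V₀] [TopologicalSpace V₀] [ContinuousAdd V₀]
  [ContinuousConstSMul K V₀]
  [AddCommGroup V₁] [Module K V₁] [TopologicalSpace V₁] [ContinuousAdd V₁]
  [ContinuousConstSMul K V₁]

lemma Submodule.eq_top_of_topologicalClosure_eq_top_of_le {p N : Submodule K V₀}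
    (hp : p.topologicalClosure = ⊤) (hpN : p ≤ N) (hN : IsClosed (N : Set V₀)) : N = ⊤ :=
  top_le_iff.mp (hp ▸ p.topologicalClosure_minimal hpN hN)

theorem Submodule.topologicalClosure_biSup_eq_top_of_triangular (e : E ≃L[K] V₀ × V₁)
    {s : Set ι} {L : ι → Submodule K E} {K₀ : ι → Submodule K V₀} {K₁ : ι → Submodule K V₁}
    (hK₀ : (⨆ i ∈ s, K₀ i).topologicalClosure = ⊤) (hK₁ : (⨆ i ∈ s, K₁ i).topologicalClosure = ⊤)
    (hL₀ : ∀ i ∈ s, ∀ x ∈ K₀ i, e.symm (x, 0) ∈ L i)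
    (hL₁ : ∀ i ∈ s, ∀ y ∈ K₁ i, ∃ x, e.symm (x, y) ∈ L i) :
    (⨆ i ∈ s, L i).topologicalClosure = ⊤ := by
  set M := (⨆ i ∈ s, L i).topologicalClosure
  have hL : ∀ i ∈ s, L i ≤ M := fun i hi =>
    (le_iSup₂ (f := fun i (_ : i ∈ s) => L i) i hi).trans (le_topologicalClosure _)
  have hM : IsClosed (M : Set E) := isClosed_topologicalClosure _
  have h₀ : ∀ x, e.symm (x, 0) ∈ M := by
    let j₀ : V₀ →L[K] E := (e.symm : V₀ × V₁ →L[K] E) ∘L .inl K V₀ V₁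
    have hj₀ : M.comap (j₀ : V₀ →ₗ[K] E) = ⊤ :=
      eq_top_of_topologicalClosure_eq_top_of_le hK₀
        (iSup₂_le fun i hi x hx => hL i hi (hL₀ i hi x hx)) (hM.preimage j₀.continuous)
    exact fun x => (hj₀ ▸ mem_top : x ∈ M.comap (j₀ : V₀ →ₗ[K] E))
  have h₁ : ∀ y, e.symm (0, y) ∈ M := by
    let j₁ : V₁ →L[K] E := (e.symm : V₀ × V₁ →L[K] E) ∘L .inr K V₀ V₁
    have hK₁M : ∀ i ∈ s, K₁ i ≤ M.comap (j₁ : V₁ →ₗ[K] E) := fun i hi y hy => by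
      obtain ⟨x, hx⟩ := hL₁ i hi y hy
      have hsub : e.symm (0, y) = e.symm (x, y) - e.symm (x, 0) := by simp [← map_sub]
      exact (hsub ▸ sub_mem (hL i hi hx) (h₀ x) : e.symm (0, y) ∈ M)
    have hj₁ : M.comap (j₁ : V₁ →ₗ[K] E) = ⊤ :=
      eq_top_of_topologicalClosure_eq_top_of_le hK₁ (iSup₂_le hK₁M) (hM.preimage j₁.continuous)
    exact fun y => (hj₁ ▸ mem_top : y ∈ M.comap (j₁ : V₁ →ₗ[K] E))
  refine eq_top_iff.mpr fun z _ => ?_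
  have : z = e.symm ((e z).1, 0) + e.symm (0, (e z).2) := by simp [← map_add]
  exact this ▸ add_mem (h₀ _) (h₁ _)

end Density

lemma ContinuousLinearMap.mem_spectrum_of_ker_ne_bot {𝕜 E : Type*} [NontriviallyNormedField 𝕜]
    [NormedAddCommGroup E] [NormedSpace 𝕜 E] {T : E →L[𝕜] E} {w : 𝕜}
    (h : LinearMap.ker ((T - w • 1 : E →L[𝕜] E) : E →ₗ[𝕜] E) ≠ ⊥) : w ∈ spectrum 𝕜 T := by
  rw [spectrum.mem_iff, Algebra.algebraMap_eq_smul_one, ← neg_sub, IsUnit.neg_iff]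
  intro hu
  exact h (LinearMap.ker_eq_bot.mpr
    (Module.End.isUnit_iff _ |>.mp (hu.map toLinearMapRingHom)).injective)

section BlockOperator

variable {H₀ H₁ : Type*} [NormedAddCommGroup H₀] [NormedSpace ℂ H₀]
  [NormedAddCommGroup H₁] [NormedSpace ℂ H₁]

@[simp]
lemma blockOp₂_toLp (T₀ : H₀ →L[ℂ] H₀) (S : H₁ →L[ℂ] H₀) (T₁ : H₁ →L[ℂ] H₁) (x : H₀) (y : H₁) :
    blockOp₂ T₀ S T₁ (WithLp.toLp 2 (x, y)) = WithLp.toLp 2 (T₀ x + S y, T₁ y) := rfl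

lemma blockOp₂_sub_smul_one (T₀ : H₀ →L[ℂ] H₀) (S : H₁ →L[ℂ] H₀) (T₁ : H₁ →L[ℂ] H₁) (w : ℂ) :
    blockOp₂ T₀ S T₁ - w • 1 = blockOp₂ (T₀ - w • 1) S (T₁ - w • 1) := by
  ext ⟨x, y⟩
  simp only [sub_apply, blockOp₂_toLp, smul_apply, one_apply_eq_self]
  rw [← WithLp.toLp_smul, ← WithLp.toLp_sub, Prod.smul_mk, Prod.mk_sub_mk, sub_add_eq_add_sub]

lemma toLinearMap_blockOp₂ (A₀ : H₀ →L[ℂ] H₀) (S : H₁ →L[ℂ] H₀) (A₁ : H₁ →L[ℂ] H₁) :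
    (blockOp₂ A₀ S A₁ : WithLp 2 (H₀ × H₁) →ₗ[ℂ] WithLp 2 (H₀ × H₁)) =
      (WithLp.linearEquiv 2 ℂ (H₀ × H₁)).symm ∘ₗ
        LinearMap.blockTriangular (A₀ : H₀ →ₗ[ℂ] H₀) (S : H₁ →ₗ[ℂ] H₀) (A₁ : H₁ →ₗ[ℂ] H₁) ∘ₗ
          (WithLp.linearEquiv 2 ℂ (H₀ × H₁) : WithLp 2 (H₀ × H₁) →ₗ[ℂ] H₀ × H₁) :=
  rfl

lemma blockOp₂_surjective {A₀ : H₀ →L[ℂ] H₀} (S : H₁ →L[ℂ] H₀) {A₁ : H₁ →L[ℂ] H₁}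
    (h₀ : Function.Surjective A₀) (h₁ : Function.Surjective A₁) :
    Function.Surjective (blockOp₂ A₀ S A₁) := by
  rw [← coe_coe, toLinearMap_blockOp₂, LinearMap.coe_comp, LinearMap.coe_comp]
  exact (LinearEquiv.surjective _).comp
    ((LinearMap.blockTriangular_surjective _ h₀ h₁).comp (LinearEquiv.surjective _))

lemma finrank_ker_blockOp₂ {A₀ : H₀ →L[ℂ] H₀} (S : H₁ →L[ℂ] H₀) (A₁ : H₁ →L[ℂ] H₁)
    [Module.Finite ℂ (LinearMap.ker (A₀ : H₀ →ₗ[ℂ] H₀))]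
    [Module.Finite ℂ (LinearMap.ker (A₁ : H₁ →ₗ[ℂ] H₁))] (h₀ : Function.Surjective A₀) :
    Module.finrank ℂ
        (LinearMap.ker (blockOp₂ A₀ S A₁ : WithLp 2 (H₀ × H₁) →ₗ[ℂ] WithLp 2 (H₀ × H₁))) =
      Module.finrank ℂ (LinearMap.ker (A₀ : H₀ →ₗ[ℂ] H₀)) +
        Module.finrank ℂ (LinearMap.ker (A₁ : H₁ →ₗ[ℂ] H₁)) := by
  rw [toLinearMap_blockOp₂, LinearEquiv.ker_comp, LinearMap.ker_comp,
    Submodule.comap_equiv_eq_map_symm, LinearEquiv.finrank_map_eq,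
    LinearMap.finrank_ker_blockTriangular _ _ h₀]

end BlockOperator

theorem statement0_general
    {H₀ H₁ : Type*}
    [NormedAddCommGroup H₀] [InnerProductSpace ℂ H₀]
    [NormedAddCommGroup H₁] [InnerProductSpace ℂ H₁]
    (Ω : Set ℂ)
    (T₀ : H₀ →L[ℂ] H₀) (T₁ : H₁ →L[ℂ] H₁) (S : H₁ →L[ℂ] H₀)
    (h₀ : CowenDouglas 1 Ω T₀) (h₁ : CowenDouglas 1 Ω T₁) :
    CowenDouglas 2 Ω (blockOp₂ T₀ S T₁) := by
  obtain ⟨-, surj₀, dense₀, dim₀⟩ := h₀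
  obtain ⟨-, surj₁, dense₁, dim₁⟩ := h₁
  have dim : ∀ w ∈ Ω, Module.finrank ℂ (LinearMap.ker
      ((blockOp₂ T₀ S T₁ - w • 1 : WithLp 2 (H₀ × H₁) →L[ℂ] WithLp 2 (H₀ × H₁)) :
        WithLp 2 (H₀ × H₁) →ₗ[ℂ] WithLp 2 (H₀ × H₁))) = 2 := fun w hw => by
    have := Module.finite_of_finrank_eq_succ (dim₀ w hw)
    have := Module.finite_of_finrank_eq_succ (dim₁ w hw)
    rw [blockOp₂_sub_smul_one, finrank_ker_blockOp₂ _ _ (surj₀ w hw), dim₀ w hw, dim₁ w hw]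
  refine ⟨fun w hw => mem_spectrum_of_ker_ne_bot fun hbot => ?_, fun w hw => ?_, ?_, dim⟩
  · exact two_ne_zero (by rw [← dim w hw, hbot, finrank_bot])
  · rw [blockOp₂_sub_smul_one]
    exact blockOp₂_surjective S (surj₀ w hw) (surj₁ w hw)
  · refine Submodule.topologicalClosure_biSup_eq_top_of_triangular
      (WithLp.prodContinuousLinearEquiv 2 ℂ H₀ H₁) dense₀ dense₁ (fun w _ x hx => ?_)
      (fun w hw y hy => ?_)
    · rw [blockOp₂_sub_smul_one]
      simpa using hx
    · obtain ⟨x, hx⟩ := surj₀ w hw (-S y)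
      refine ⟨x, ?_⟩
      rw [blockOp₂_sub_smul_one]
      simpa [hx] using hy

/-- If `T₀, T₁ ∈ B₁(Ω)` and `S` is an arbitrary bounded operator, then
`[[T₀, S], [0, T₁]] ∈ B₂(Ω)`. -/
theorem statement0
    {H₀ H₁ : Type*}
    [NormedAddCommGroup H₀] [InnerProductSpace ℂ H₀] [CompleteSpace H₀]
    [TopologicalSpace.SeparableSpace H₀]
    [NormedAddCommGroup H₁] [InnerProductSpace ℂ H₁] [CompleteSpace H₁]
    [TopologicalSpace.SeparableSpace H₁]
    (Ω : Set ℂ) (hΩopen : IsOpen Ω) (hΩconn : IsConnected Ω)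
    (T₀ : H₀ →L[ℂ] H₀) (T₁ : H₁ →L[ℂ] H₁) (S : H₁ →L[ℂ] H₀)
    (h₀ : CowenDouglas 1 Ω T₀) (h₁ : CowenDouglas 1 Ω T₁) :
    CowenDouglas 2 Ω (blockOp₂ T₀ S T₁) :=
  statement0_general Ω T₀ T₁ S h₀ h₁
end
end

section
/- Let Ω be a connected open subset of ℂ, let T_0 and T_1 be operators in B_1(Ω) acting on complex separable Hilbert spaces H_0 and H_1 respectively, and let S : H_1 → H_0 be a bounded operator satisfying T_0 S = S T_1. Then the following are equivalent: (a) S is not the zero operator; (b) S has dense range; (c) the adjoint S* is injective. -/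
/-!
Near each `w₀ ∈ Ω` the eigenvectors of `T ∈ B₁(Ω)` form a holomorphic line: if `R` is a bounded
right inverse of `T - w₀` and `T γ = w₀ γ`, then `u w = (1 - (w - w₀) R)⁻¹ γ` spans `ker (T - w)`
for `w` near `w₀`. Hence, locally, the set of `w` with `S (ker (T₁ - w)) = 0` is the zero set of
the holomorphic function `S ∘ u`, and by the identity theorem and the connectedness of `Ω`
either `S` kills every `ker (T₁ - w)`, so `S = 0` because these kernels span `H₁`, or it kills
none of them off a discrete set. In the second case `S` maps `ker (T₁ - w)` onto the line
`ker (T₀ - w)` for all but isolated `w`, and continuity of the holomorphic frame of `T₀` puts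
every `ker (T₀ - w)` into the closure of the range of `S`, which is therefore `H₀`. Finally, a
range is dense exactly when the adjoint is injective.
-/

noncomputable section

open ContinuousLinearMap
open scoped InnerProductSpace

open Filter Topology Module.End

theorem ContinuousLinearMap.hasRightInverse_of_surjective {𝕜 E F : Type*} [RCLike 𝕜]
    [NormedAddCommGroup E] [InnerProductSpace 𝕜 E] [CompleteSpace E]
    [NormedAddCommGroup F] [NormedSpace 𝕜 F] [CompleteSpace F]
    (f : E →L[𝕜] F) (hf : Function.Surjective f) : f.HasRightInverse := by
  have : CompleteSpace f.ker := f.isClosed_ker.completeSpace_coe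
  let e := f.equivProdOfSurjectiveOfIsCompl f.ker.orthogonalProjectionOnto
    (LinearMap.range_eq_top.2 hf) (LinearMap.range_eq_top.2 fun v => ⟨v, by simp⟩)
    (by simpa using f.ker.isCompl_orthogonal)
  exact ⟨e.symm.toContinuousLinearMap ∘L .inl 𝕜 F _,
    fun y => congrArg Prod.fst (e.apply_symm_apply (y, 0))⟩

theorem ContinuousLinearMap.denseRange_iff_injective_adjoint {𝕜 E F : Type*} [RCLike 𝕜]
    [NormedAddCommGroup E] [InnerProductSpace 𝕜 E] [CompleteSpace E]
    [NormedAddCommGroup F] [InnerProductSpace 𝕜 F] [CompleteSpace F] (S : E →L[𝕜] F) :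
    DenseRange S ↔ Function.Injective (adjoint S) := by
  rw [← coe_coe (adjoint S), ← LinearMap.ker_eq_bot, ← Submodule.orthogonal_eq_top_iff,
    orthogonal_ker, adjoint_adjoint, ← Submodule.dense_iff_topologicalClosure_eq_top,
    LinearMap.coe_range]
  rfl

theorem exists_analyticAt_mem_eigenspace {𝕜 E : Type*} [NontriviallyNormedField 𝕜]
    [NormedAddCommGroup E] [NormedSpace 𝕜 E] [CompleteSpace E]
    {T R : E →L[𝕜] E} {w₀ : 𝕜} (hR : Function.RightInverse R (T - w₀ • 1 : E →L[𝕜] E))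
    {γ : E} (hγ : γ ∈ eigenspace (T : E →ₗ[𝕜] E) w₀) (hγ0 : γ ≠ 0) :
    ∃ u : 𝕜 → E, AnalyticAt 𝕜 u w₀ ∧
      ∀ᶠ w in 𝓝 w₀, u w ∈ eigenspace (T : E →ₗ[𝕜] E) w ∧ u w ≠ 0 := by
  set A : 𝕜 → E →L[𝕜] E := fun w => (w - w₀) • R
  have hA : Continuous A := by fun_prop
  have hA₀ : A w₀ = 0 := by simp [A]
  refine ⟨fun w => Ring.inverse (1 - A w) γ, ?_, ?_⟩
  · have : AnalyticAt 𝕜 (fun w => Ring.inverse (1 - A w)) w₀ := by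
      refine AnalyticAt.comp (g := fun B : E →L[𝕜] E => Ring.inverse (1 - B)) ?_ (by fun_prop)
      rw [hA₀]; exact analyticAt_inverse_one_sub 𝕜 _
    exact (ContinuousLinearMap.apply 𝕜 E γ).analyticAt _ |>.comp this
  have hunit : ∀ᶠ w in 𝓝 w₀, IsUnit (1 - A w) := by
    refine (continuous_const.sub hA).continuousAt.eventually (p := fun B => IsUnit B) ?_
    simp only [Pi.sub_apply, hA₀, sub_zero]
    exact Units.nhds 1
  filter_upwards [hunit] with w hw
  set v := Ring.inverse (1 - A w) γ
  have hv : v - (w - w₀) • R v = γ := by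
    simpa [A] using congrArg (· γ) (Ring.mul_inverse_cancel _ hw)
  rw [mem_eigenspace_iff] at hγ ⊢
  refine ⟨?_, fun h => hγ0 (by simpa [h] using hv.symm)⟩
  have hRv := hR v
  simp only [sub_apply, smul_apply, one_apply_eq_self, ContinuousLinearMap.coe_coe] at hRv hγ ⊢
  -- `v = γ + (w - w₀) R v` and `(T - w₀) R = 1` give `(T - w) v = 0`
  have hTv : T v = T γ + (w - w₀) • T (R v) := by
    rw [← map_smul, ← map_add, ← hv, sub_add_cancel]
  linear_combination (norm := module) hTv + hγ + (w - w₀) • hRv - w₀ • hv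

theorem IsPreconnected.forall_or_forall_eventually_not {X : Type*} [TopologicalSpace X]
    {U : Set X} (hU : IsPreconnected U) {p : X → Prop}
    (h : ∀ x ∈ U, (∀ᶠ y in 𝓝 x, p y) ∨ ∀ᶠ y in 𝓝[≠] x, ¬ p y) :
    (∀ x ∈ U, p x) ∨ ∀ x ∈ U, ∀ᶠ y in 𝓝[≠] x, ¬ p y := by
  set A := {x | ∀ᶠ y in 𝓝 x, p y}
  by_cases hA : (U ∩ A).Nonempty
  · refine Or.inl fun x hx =>
      (hU.subset_of_closure_inter_subset isOpen_setOfPred_eventually_nhds hA ?_ hx).self_of_nhds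
    rintro x ⟨hx_cl, hxU⟩
    by_contra hxA
    have hnot := eventually_nhdsWithin_iff.1 ((h x hxU).resolve_left hxA)
    obtain ⟨y, hyA, hy⟩ := (mem_closure_iff_frequently.1 hx_cl).and_eventually hnot |>.exists
    obtain rfl : y = x := by_contra fun hyx => hy hyx hyA.self_of_nhds
    exact hxA hyA
  · exact Or.inr fun x hx => (h x hx).resolve_left fun hxA => hA ⟨x, hx, hxA⟩

theorem ker_sub_smul_one_eq_eigenspace {𝕜 E : Type*} [NontriviallyNormedField 𝕜]
    [NormedAddCommGroup E] [NormedSpace 𝕜 E] (T : E →L[𝕜] E) (w : 𝕜) :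
    LinearMap.ker ((T - w • (1 : E →L[𝕜] E) : E →L[𝕜] E) : E →ₗ[𝕜] E) =
      eigenspace (T : E →ₗ[𝕜] E) w := by
  rw [eigenspace_def]; rfl

theorem mem_eigenspace_of_comp_eq {𝕜 E F : Type*} [NontriviallyNormedField 𝕜]
    [NormedAddCommGroup E] [NormedSpace 𝕜 E] [NormedAddCommGroup F] [NormedSpace 𝕜 F]
    {T₀ : F →L[𝕜] F} {T₁ : E →L[𝕜] E} {S : E →L[𝕜] F} (hint : T₀ ∘L S = S ∘L T₁)
    {w : 𝕜} {x : E} (hx : x ∈ eigenspace (T₁ : E →ₗ[𝕜] E) w) :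
    S x ∈ eigenspace (T₀ : F →ₗ[𝕜] F) w := by
  rw [mem_eigenspace_iff, ContinuousLinearMap.coe_coe] at hx ⊢
  rw [← map_smul, ← hx]
  exact congrArg (· x) hint

namespace CowenDouglas

variable {H : Type*} [NormedAddCommGroup H] [InnerProductSpace ℂ H]
  {n : ℕ} {Ω : Set ℂ} {T : H →L[ℂ] H}

theorem finrank_eigenspace (h : CowenDouglas n Ω T) {w : ℂ} (hw : w ∈ Ω) :
    Module.finrank ℂ (eigenspace (T : H →ₗ[ℂ] H) w) = n :=
  ker_sub_smul_one_eq_eigenspace T w ▸ h.2.2.2 w hw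

theorem eq_top_of_eigenspace_le (h : CowenDouglas n Ω T) {M : Submodule ℂ H}
    (hM : IsClosed (M : Set H)) (hle : ∀ w ∈ Ω, eigenspace (T : H →ₗ[ℂ] H) w ≤ M) : M = ⊤ := by
  have hspan := h.2.2.1
  simp only [ker_sub_smul_one_eq_eigenspace] at hspan
  exact top_le_iff.1 <| hspan ▸ Submodule.topologicalClosure_minimal _ (iSup₂_le hle) hM

theorem exists_ne_zero_mem_eigenspace (h : CowenDouglas 1 Ω T) {w : ℂ} (hw : w ∈ Ω) :
    ∃ γ ∈ eigenspace (T : H →ₗ[ℂ] H) w, γ ≠ 0 :=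
  Submodule.exists_mem_ne_zero_of_ne_bot fun hbot => by
    have := h.finrank_eigenspace hw
    rw [hbot, finrank_bot] at this
    exact zero_ne_one this

theorem nontrivial (h : CowenDouglas 1 Ω T) (hΩ : Ω.Nonempty) : Nontrivial H :=
  let ⟨_, hw⟩ := hΩ
  let ⟨γ, _, hγ⟩ := h.exists_ne_zero_mem_eigenspace hw
  ⟨γ, 0, hγ⟩

variable [CompleteSpace H]

theorem exists_analyticAt_eigenspace_eq_span (h : CowenDouglas 1 Ω T) (hΩ : IsOpen Ω)
    {w : ℂ} (hw : w ∈ Ω) :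
    ∃ u : ℂ → H, AnalyticAt ℂ u w ∧ ∀ᶠ z in 𝓝 w, eigenspace (T : H →ₗ[ℂ] H) z = ℂ ∙ u z := by
  obtain ⟨γ, hγ, hγ0⟩ := h.exists_ne_zero_mem_eigenspace hw
  obtain ⟨R, hR⟩ := (T - w • 1).hasRightInverse_of_surjective (h.2.1 w hw)
  obtain ⟨u, hua, hu⟩ := exists_analyticAt_mem_eigenspace hR hγ hγ0
  refine ⟨u, hua, ?_⟩
  filter_upwards [hu, hΩ.mem_nhds hw] with z ⟨huz, hu0⟩ hz
  exact eq_span_singleton_of_mem_of_finrank_eq_one (h.finrank_eigenspace hz) huz hu0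

theorem eventually_eigenspace_le_ker_or {F : Type*} [NormedAddCommGroup F] [NormedSpace ℂ F]
    (h : CowenDouglas 1 Ω T) (hΩ : IsOpen Ω) {w : ℂ} (hw : w ∈ Ω) (S : H →L[ℂ] F) :
    (∀ᶠ z in 𝓝 w, eigenspace (T : H →ₗ[ℂ] H) z ≤ S.ker) ∨
      ∀ᶠ z in 𝓝[≠] w, ¬ eigenspace (T : H →ₗ[ℂ] H) z ≤ S.ker := by
  obtain ⟨u, hua, hspan⟩ := h.exists_analyticAt_eigenspace_eq_span hΩ hw
  have hiff : ∀ᶠ z in 𝓝 w, eigenspace (T : H →ₗ[ℂ] H) z ≤ S.ker ↔ S (u z) = 0 := by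
    filter_upwards [hspan] with z hz
    rw [hz, Submodule.span_singleton_le_iff_mem, LinearMap.mem_ker, ContinuousLinearMap.coe_coe]
  refine ((S.analyticAt _).comp hua).eventually_eq_zero_or_eventually_ne_zero.imp
    (fun h0 => ?_) (fun h0 => ?_)
  · filter_upwards [h0, hiff] with z hz hz' using hz'.2 hz
  · filter_upwards [h0, nhdsWithin_le_nhds hiff] with z hz hz' using mt hz'.1 hz

theorem eigenspace_le_topologicalClosure_range {H₁ : Type*} [NormedAddCommGroup H₁]
    [InnerProductSpace ℂ H₁] {T₁ : H₁ →L[ℂ] H₁} {S : H₁ →L[ℂ] H}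
    (h : CowenDouglas 1 Ω T) (hΩ : IsOpen Ω) (hint : T ∘L S = S ∘L T₁) {w : ℂ} (hw : w ∈ Ω)
    (hS : ∀ᶠ z in 𝓝[≠] w, ¬ eigenspace (T₁ : H₁ →ₗ[ℂ] H₁) z ≤ S.ker) :
    eigenspace (T : H →ₗ[ℂ] H) w ≤ S.range.topologicalClosure := by
  obtain ⟨u, hua, hspan⟩ := h.exists_analyticAt_eigenspace_eq_span hΩ hw
  have hu : ∀ᶠ z in 𝓝[≠] w, u z ∈ S.range.topologicalClosure := by
    filter_upwards [hS, nhdsWithin_le_nhds hspan, nhdsWithin_le_nhds (hΩ.mem_nhds hw)]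
      with z hz hzu hzΩ
    obtain ⟨x, hx, hSx⟩ := SetLike.not_le_iff_exists.1 hz
    have hle : eigenspace (T : H →ₗ[ℂ] H) z ≤ S.range := by
      rw [eq_span_singleton_of_mem_of_finrank_eq_one (h.finrank_eigenspace hzΩ)
        (mem_eigenspace_of_comp_eq hint hx) hSx, Submodule.span_singleton_le_iff_mem]
      exact ⟨x, rfl⟩
    exact S.range.le_topologicalClosure (hle (hzu ▸ Submodule.mem_span_singleton_self _))
  rw [hspan.self_of_nhds, Submodule.span_singleton_le_iff_mem]
  exact (Submodule.isClosed_topologicalClosure _).mem_of_tendsto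
    (hua.continuousAt.tendsto.mono_left nhdsWithin_le_nhds) hu

end CowenDouglas

theorem CowenDouglas.denseRange_of_comp_eq {H₀ H₁ : Type*}
    [NormedAddCommGroup H₀] [InnerProductSpace ℂ H₀] [CompleteSpace H₀]
    [NormedAddCommGroup H₁] [InnerProductSpace ℂ H₁] [CompleteSpace H₁]
    {Ω : Set ℂ} {T₀ : H₀ →L[ℂ] H₀} {T₁ : H₁ →L[ℂ] H₁} {S : H₁ →L[ℂ] H₀}
    (h₀ : CowenDouglas 1 Ω T₀) (h₁ : CowenDouglas 1 Ω T₁) (hΩo : IsOpen Ω)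
    (hΩc : IsPreconnected Ω) (hint : T₀ ∘L S = S ∘L T₁) (hS : S ≠ 0) : DenseRange S := by
  rcases hΩc.forall_or_forall_eventually_not fun w hw =>
    h₁.eventually_eigenspace_le_ker_or hΩo hw S with hker | hnot
  · exact absurd (coe_injective (by simpa using h₁.eq_top_of_eigenspace_le S.isClosed_ker hker)) hS
  · have hclosure := h₀.eq_top_of_eigenspace_le (Submodule.isClosed_topologicalClosure _)
      fun w hw => h₀.eigenspace_le_topologicalClosure_range hΩo hint hw (hnot w hw)
    exact Submodule.dense_iff_topologicalClosure_eq_top.2 hclosure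

theorem statement1_general
    {H₀ H₁ : Type*}
    [NormedAddCommGroup H₀] [InnerProductSpace ℂ H₀] [CompleteSpace H₀]
    [NormedAddCommGroup H₁] [InnerProductSpace ℂ H₁] [CompleteSpace H₁]
    (Ω : Set ℂ) (hΩopen : IsOpen Ω) (hΩconn : IsConnected Ω)
    (T₀ : H₀ →L[ℂ] H₀) (T₁ : H₁ →L[ℂ] H₁) (S : H₁ →L[ℂ] H₀)
    (h₀ : CowenDouglas 1 Ω T₀) (h₁ : CowenDouglas 1 Ω T₁)
    (hint : T₀ ∘L S = S ∘L T₁) :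
    (S ≠ 0 ↔ DenseRange S) ∧
    (S ≠ 0 ↔ Function.Injective (ContinuousLinearMap.adjoint S)) := by
  have : Nontrivial H₀ := h₀.nontrivial hΩconn.nonempty
  have hdense : S ≠ 0 ↔ DenseRange S := by
    refine ⟨h₀.denseRange_of_comp_eq h₁ hΩopen hΩconn.isPreconnected hint, ?_⟩
    rintro hd rfl
    obtain ⟨y, hy⟩ := exists_ne (0 : H₀)
    simpa [hy] using hd y
  exact ⟨hdense, hdense.trans S.denseRange_iff_injective_adjoint⟩

/-- For `T₀, T₁ ∈ B₁(Ω)` and a bounded intertwiner `S` (`T₀ S = S T₁`):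
`S ≠ 0` iff `S` has dense range iff `S*` is injective. -/
theorem statement1
    {H₀ H₁ : Type*}
    [NormedAddCommGroup H₀] [InnerProductSpace ℂ H₀] [CompleteSpace H₀]
    [TopologicalSpace.SeparableSpace H₀]
    [NormedAddCommGroup H₁] [InnerProductSpace ℂ H₁] [CompleteSpace H₁]
    [TopologicalSpace.SeparableSpace H₁]
    (Ω : Set ℂ) (hΩopen : IsOpen Ω) (hΩconn : IsConnected Ω)
    (T₀ : H₀ →L[ℂ] H₀) (T₁ : H₁ →L[ℂ] H₁) (S : H₁ →L[ℂ] H₀)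
    (h₀ : CowenDouglas 1 Ω T₀) (h₁ : CowenDouglas 1 Ω T₁)
    (hint : T₀ ∘L S = S ∘L T₁) :
    (S ≠ 0 ↔ DenseRange S) ∧
    (S ≠ 0 ↔ Function.Injective (ContinuousLinearMap.adjoint S)) :=
  statement1_general Ω hΩopen hΩconn T₀ T₁ S h₀ h₁ hint
end
end

section
/- Let Ω be a connected open subset of ℂ, let T be an operator in B_1(Ω) on a complex separable Hilbert space H, and let X be a bounded operator on H that is quasinilpotent and satisfies TX = XT. Then X = 0. -/
noncomputable section

open ContinuousLinearMap
open scoped InnerProductSpace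

/-!
Since `X` commutes with `T`, it maps each eigenspace `ker (T - w)` into itself; these are lines,
so `X` acts on each of them by a scalar, which is an eigenvalue of `X`. An eigenvalue `c` of `X`
satisfies `‖c‖ ≤ ‖X ^ k‖ ^ (1 / k)`, so quasinilpotence forces `c = 0`. Thus `X` vanishes on every
`ker (T - w)`, hence on their closed span, which is all of `H`.
-/

theorem LinearMap.exists_eq_smul_of_mapsTo_of_finrank_eq_one {K V : Type*} [Field K]
    [AddCommGroup V] [Module K V] {p : Submodule K V} (hp : Module.finrank K p = 1)
    {X : V →ₗ[K] V} (hX : ∀ v ∈ p, X v ∈ p) :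
    ∃ c : K, ∀ v ∈ p, X v = c • v := by
  obtain ⟨c, hc, -⟩ := (X.restrict hX).existsUnique_eq_smul_id_of_finrank_eq_one hp
  exact ⟨c, fun v hv => congrArg Subtype.val (LinearMap.congr_fun hc ⟨v, hv⟩)⟩

namespace ContinuousLinearMap

variable {𝕜 E : Type*} [NontriviallyNormedField 𝕜] [NormedAddCommGroup E] [NormedSpace 𝕜 E]

theorem mapsTo_ker_of_commute {S X : E →L[𝕜] E} (h : Commute S X) {v : E} (hv : S v = 0) :
    S (X v) = 0 := by
  rw [← mul_apply_eq_comp, h.eq, mul_apply_eq_comp, hv, map_zero]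

theorem pow_apply_of_apply_eq_smul {X : E →L[𝕜] E} {c : 𝕜} {v : E} (hXv : X v = c • v) (k : ℕ) :
    (X ^ k) v = c ^ k • v := by
  induction k with
  | zero => simp
  | succ k ih => rw [pow_succ, mul_apply_eq_comp, hXv, map_smul, ih, smul_smul, pow_succ']

theorem norm_le_norm_pow_rpow_inv_of_apply_eq_smul {X : E →L[𝕜] E} {c : 𝕜} {v : E}
    (hv : v ≠ 0) (hXv : X v = c • v) {k : ℕ} (hk : k ≠ 0) :
    ‖c‖ ≤ ‖X ^ k‖ ^ (k : ℝ)⁻¹ := by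
  have hpow : ‖c‖ ^ k ≤ ‖X ^ k‖ := by
    have h := (X ^ k).le_opNorm v
    rw [pow_apply_of_apply_eq_smul hXv, norm_smul, norm_pow] at h
    exact le_of_mul_le_mul_right h (norm_pos_iff.2 hv)
  calc ‖c‖ = (‖c‖ ^ k) ^ (k : ℝ)⁻¹ := (Real.pow_rpow_inv_natCast (norm_nonneg c) hk).symm
    _ ≤ ‖X ^ k‖ ^ (k : ℝ)⁻¹ := by gcongr

variable {X : E →L[𝕜] E}

theorem eq_zero_of_apply_eq_smul_of_tendsto
    (hquasi : Filter.Tendsto (fun k : ℕ => ‖X ^ k‖ ^ (k : ℝ)⁻¹) Filter.atTop (nhds 0))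
    {c : 𝕜} {v : E} (hv : v ≠ 0) (hXv : X v = c • v) : c = 0 :=
  norm_le_zero_iff.1 <| ge_of_tendsto hquasi <| Filter.eventually_atTop.2
    ⟨1, fun _ hk => norm_le_norm_pow_rpow_inv_of_apply_eq_smul hv hXv (by omega)⟩

theorem ker_le_ker_of_commute_of_finrank_eq_one_of_tendsto
    (hquasi : Filter.Tendsto (fun k : ℕ => ‖X ^ k‖ ^ (k : ℝ)⁻¹) Filter.atTop (nhds 0))
    {S : E →L[𝕜] E} (hSX : Commute S X)
    (hS : Module.finrank 𝕜 (LinearMap.ker (S : E →ₗ[𝕜] E)) = 1) :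
    LinearMap.ker (S : E →ₗ[𝕜] E) ≤ LinearMap.ker (X : E →ₗ[𝕜] E) := by
  obtain ⟨c, hc⟩ := LinearMap.exists_eq_smul_of_mapsTo_of_finrank_eq_one hS
    (X := (X : E →ₗ[𝕜] E)) fun v hv => mapsTo_ker_of_commute hSX hv
  intro v hv
  rw [LinearMap.mem_ker, hc v hv]
  rcases eq_or_ne v 0 with rfl | hv0
  · exact smul_zero c
  · rw [eq_zero_of_apply_eq_smul_of_tendsto hquasi hv0 (hc v hv), zero_smul]

end ContinuousLinearMap

theorem ContinuousLinearMap.eq_zero_of_le_ker_of_topologicalClosure_eq_top {R M N : Type*}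
    [Semiring R] [TopologicalSpace M] [AddCommMonoid M] [Module R M] [ContinuousAdd M]
    [ContinuousConstSMul R M] [TopologicalSpace N] [AddCommMonoid N] [Module R N] [T2Space N]
    {X : M →L[R] N} {p : Submodule R M} (hp : p.topologicalClosure = ⊤)
    (hX : p ≤ LinearMap.ker (X : M →ₗ[R] N)) : X = 0 := by
  have htop := hp ▸ p.topologicalClosure_minimal hX X.isClosed_ker
  ext v
  exact htop Submodule.mem_top

theorem statement10_general
    {H : Type*} [NormedAddCommGroup H] [InnerProductSpace ℂ H]
    (Ω : Set ℂ)
    (T : H →L[ℂ] H) (hT : CowenDouglas 1 Ω T)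
    (X : H →L[ℂ] H)
    (hquasi : Filter.Tendsto (fun k : ℕ => ‖X ^ k‖ ^ ((k : ℝ)⁻¹))
      Filter.atTop (nhds 0))
    (hcomm : T * X = X * T) :
    X = 0 := by
  obtain ⟨-, -, hdense, hrank⟩ := hT
  refine eq_zero_of_le_ker_of_topologicalClosure_eq_top hdense (iSup₂_le fun w hw => ?_)
  have hTw : Commute (T - w • (1 : H →L[ℂ] H)) X :=
    Commute.sub_left hcomm ((Commute.one_left X).smul_left w)
  exact ker_le_ker_of_commute_of_finrank_eq_one_of_tendsto hquasi hTw (hrank w hw)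

/-- If `T ∈ B₁(Ω)` and `X` is quasinilpotent with `TX = XT`, then `X = 0`. -/
theorem statement10
    {H : Type*} [NormedAddCommGroup H] [InnerProductSpace ℂ H] [CompleteSpace H]
    [TopologicalSpace.SeparableSpace H]
    (Ω : Set ℂ) (hΩopen : IsOpen Ω) (hΩconn : IsConnected Ω)
    (T : H →L[ℂ] H) (hT : CowenDouglas 1 Ω T)
    (X : H →L[ℂ] H)
    (hquasi : Filter.Tendsto (fun k : ℕ => ‖X ^ k‖ ^ ((k : ℝ)⁻¹))
      Filter.atTop (nhds 0))
    (hcomm : T * X = X * T) :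
    X = 0 :=
  statement10_general Ω T hT X hquasi hcomm
end
end

section
/- Let Ω be a connected open subset of ℂ. Then every operator T in 𝓕B_2(Ω) is irreducible; that is, the only orthogonal projections commuting with T are 0 and the identity. -/
noncomputable section

open ContinuousLinearMap
open scoped InnerProductSpace

/-!
Write a projection `P` commuting with `T = [[T₀, S], [0, T₁]]` as an operator matrix
`[[A, B], [C, D]]`. The diagonal entries of `PT = TP` read `⁅T₀, A⁆ = -SC` and `⁅T₁, D⁆ = CS`,
and the intertwining `T₀S = ST₁` makes these commutators commute with `T₀`, resp. `T₁`. By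
Kleinecke–Shirokov they are quasinilpotent, so they vanish on the one-dimensional eigenspaces
`ker (Tᵢ - w)`, hence everywhere by density. Thus `SC = 0` and `A`, `D` commute with `T₀`, `T₁`.
A self-adjoint operator commuting with an operator of `B₁(Ω)` is scalar: its eigenvalue on
`ker (T - w)` is locally constant in `w`, because kernels at nearby points are not orthogonal
(they are moved into each other by `(1 - (w - w₀) R)⁻¹`, `R` a right inverse of `T - w₀`), and
`Ω` is connected. So `A = a`, `D = d`, and `CB = d - d²` with `SCB = 0` gives `d² = d` as
`S ≠ 0`. Then `B† B = CB = 0`, so `B = C = 0`, and `AS = SD` gives `a = d`.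
-/

section KleineckeShirokov

variable {R : Type*}

def ad [Ring R] (T : R) : R →+ R := AddMonoidHom.mulLeft T - AddMonoidHom.mulRight T

theorem ad_apply [Ring R] (T a : R) : ad T a = T * a - a * T := rfl

theorem ad_eq_zero_iff_commute [Ring R] {T a : R} : ad T a = 0 ↔ Commute T a := sub_eq_zero

theorem ad_mul [Ring R] (T a b : R) : ad T (a * b) = ad T a * b + a * ad T b := by
  simp only [ad_apply]; noncomm_ring

theorem iterate_ad_mul_of_commute [Ring R] {T a : R} (ha : Commute T (ad T a)) (b : R) (n : ℕ) :
    (ad T)^[n + 1] (a * b) = a * (ad T)^[n + 1] b + (n + 1) • (ad T a * (ad T)^[n] b) := by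
  induction n generalizing b with
  | zero => simp [ad_mul, add_comm]
  | succ n ih =>
    rw [Function.iterate_succ_apply', ih, map_add, ad_mul, map_nsmul, ad_mul,
      ad_eq_zero_iff_commute.mpr ha, Function.iterate_succ_apply' _ (n + 1),
      Function.iterate_succ_apply' _ n]
    simp only [zero_mul, zero_add, succ_nsmul]
    abel

theorem iterate_ad_pow_of_commute [Ring R] {T M : R} (hM : Commute T (ad T M)) (n : ℕ) :
    (ad T)^[n] (M ^ n) = n.factorial • ad T M ^ n := by
  induction n with
  | zero => simp
  | succ n ih =>
    rw [pow_succ', iterate_ad_mul_of_commute hM, Function.iterate_succ_apply', ih, map_nsmul,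
      ad_eq_zero_iff_commute.mpr (hM.pow_right n), smul_zero, mul_zero, zero_add, mul_smul_comm,
      smul_smul, ← pow_succ', Nat.factorial_succ]

theorem norm_iterate_ad_le [NormedRing R] (T a : R) (n : ℕ) :
    ‖(ad T)^[n] a‖ ≤ (2 * ‖T‖) ^ n * ‖a‖ := by
  induction n with
  | zero => simp
  | succ n ih =>
    rw [Function.iterate_succ_apply', pow_succ', mul_assoc]
    set b := (ad T)^[n] a
    calc ‖ad T b‖ ≤ ‖T‖ * ‖b‖ + ‖b‖ * ‖T‖ :=
          (norm_sub_le _ _).trans (add_le_add (norm_mul_le _ _) (norm_mul_le _ _))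
      _ = 2 * ‖T‖ * ‖b‖ := by ring
      _ ≤ 2 * ‖T‖ * ((2 * ‖T‖) ^ n * ‖a‖) := by gcongr

/-- Kleinecke–Shirokov: `ad T M` is quasinilpotent. -/
theorem factorial_mul_norm_ad_pow_le (𝕜 : Type*) [RCLike 𝕜] [NormedRing R] [NormOneClass R]
    [NormedSpace 𝕜 R] {T M : R} (hM : Commute T (ad T M)) (n : ℕ) :
    (n.factorial : ℝ) * ‖ad T M ^ n‖ ≤ (2 * ‖T‖ * ‖M‖) ^ n :=
  calc (n.factorial : ℝ) * ‖ad T M ^ n‖ = ‖(ad T)^[n] (M ^ n)‖ := by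
        rw [iterate_ad_pow_of_commute hM, RCLike.norm_nsmul 𝕜, nsmul_eq_mul]
    _ ≤ (2 * ‖T‖) ^ n * ‖M‖ ^ n :=
        (norm_iterate_ad_le T _ n).trans (by gcongr; exact norm_pow_le M n)
    _ = (2 * ‖T‖ * ‖M‖) ^ n := by ring

end KleineckeShirokov

theorem eq_zero_of_forall_factorial_mul_pow_le {r C : ℝ} (hr : 0 ≤ r)
    (h : ∀ n : ℕ, (n.factorial : ℝ) * r ^ n ≤ C ^ n) : r = 0 := by
  by_contra hne
  have hpos : 0 < r := lt_of_le_of_ne hr (Ne.symm hne)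
  obtain ⟨n, hn⟩ :=
    ((FloorSemiring.tendsto_pow_div_factorial_atTop (C / r)).eventually_lt_const one_pos).exists
  refine (not_le.mpr hn) ?_
  rw [le_div_iff₀ (by positivity), one_mul, div_pow, le_div_iff₀ (by positivity)]
  exact h n

theorem ContinuousLinearMap.HasRightInverse.of_surjective {E F : Type*} [NormedAddCommGroup E]
    [InnerProductSpace ℂ E] [CompleteSpace E] [NormedAddCommGroup F] [NormedSpace ℂ F]
    [CompleteSpace F] {f : E →L[ℂ] F} (hf : Function.Surjective f) : f.HasRightInverse := by
  set K := LinearMap.ker (f : E →ₗ[ℂ] F)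
  have : CompleteSpace K := f.isClosed_ker.completeSpace_coe
  set φ : Kᗮ →L[ℂ] F := f ∘L Kᗮ.subtypeL
  have hinj : LinearMap.ker (φ : Kᗮ →ₗ[ℂ] F) = ⊥ := by
    refine LinearMap.ker_eq_bot'.mpr fun x hx => Subtype.ext ?_
    exact (Submodule.mem_bot ℂ).mp (K.inf_orthogonal_eq_bot ▸ ⟨hx, x.2⟩)
  have hsurj : LinearMap.range (φ : Kᗮ →ₗ[ℂ] F) = ⊤ := by
    refine LinearMap.range_eq_top.mpr fun y => ?_
    obtain ⟨x, rfl⟩ := hf y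
    have hproj : f (K.starProjection x) = 0 := K.starProjection_apply_mem x
    refine ⟨⟨x - K.starProjection x, K.sub_starProjection_mem_orthogonal x⟩, ?_⟩
    simp [φ, hproj]
  set e := ContinuousLinearEquiv.ofBijective φ hinj hsurj
  exact ⟨Kᗮ.subtypeL ∘L (e.symm : F →L[ℂ] Kᗮ), fun y => e.apply_symm_apply y⟩

theorem eq_zero_of_ad_apply_eq_smul {E : Type*} [NormedAddCommGroup E] [NormedSpace ℂ E]
    {T M : E →L[ℂ] E} (hM : Commute T (ad T M)) {v : E} (hv : v ≠ 0) {φ : ℂ}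
    (hφ : ad T M v = φ • v) : φ = 0 := by
  have : Nontrivial E := ⟨⟨v, 0, hv⟩⟩
  have hpow : ∀ n : ℕ, (ad T M ^ n) v = φ ^ n • v := by
    intro n
    induction n with
    | zero => simp
    | succ n ih => rw [pow_succ', mul_apply_eq_comp, ih, map_smul, hφ, smul_smul, ← pow_succ]
  refine norm_eq_zero.mp (eq_zero_of_forall_factorial_mul_pow_le (C := 2 * ‖T‖ * ‖M‖)
    (norm_nonneg φ) fun n => ?_)
  have hvpos : 0 < ‖v‖ := norm_pos_iff.mpr hv
  have : ‖φ‖ ^ n ≤ ‖ad T M ^ n‖ := by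
    refine le_of_mul_le_mul_right ?_ hvpos
    simpa [hpow, norm_smul] using (ad T M ^ n).le_opNorm v
  calc (n.factorial : ℝ) * ‖φ‖ ^ n ≤ n.factorial * ‖ad T M ^ n‖ := by gcongr
    _ ≤ _ := factorial_mul_norm_ad_pow_le ℂ hM n

theorem ContinuousLinearMap.eq_zero_of_le_ker {E F : Type*} [NormedAddCommGroup E]
    [NormedSpace ℂ E] [NormedAddCommGroup F] [NormedSpace ℂ F] {p : Submodule ℂ E}
    (hp : p.topologicalClosure = ⊤) {X : E →L[ℂ] F} (hX : p ≤ LinearMap.ker (X : E →ₗ[ℂ] F)) :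
    X = 0 := by
  have := Submodule.topologicalClosure_minimal p hX X.isClosed_ker
  rw [hp, top_le_iff] at this
  ext v
  exact LinearMap.congr_fun (LinearMap.ker_eq_top.mp this) v

section KernelsOfShiftedOperator

variable {H : Type*} [NormedAddCommGroup H] [InnerProductSpace ℂ H]

-- Spelled as in `CowenDouglas`, so that its clauses apply to `kerSub` verbatim.
abbrev kerSub (T : H →L[ℂ] H) (w : ℂ) : Submodule ℂ H :=
  LinearMap.ker ((T - w • (1 : H →L[ℂ] H) : H →L[ℂ] H) : H →ₗ[ℂ] H)

theorem mem_kerSub_iff {T : H →L[ℂ] H} {w : ℂ} {v : H} : v ∈ kerSub T w ↔ T v = w • v := by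
  simp [sub_eq_zero]

theorem exists_ne_zero_mem_kerSub {T : H →L[ℂ] H} {w : ℂ}
    (hw : Module.finrank ℂ (kerSub T w) = 1) : ∃ v ∈ kerSub T w, v ≠ 0 :=
  Submodule.exists_mem_ne_zero_of_ne_bot fun h => by rw [h, finrank_bot] at hw; exact zero_ne_one hw

theorem exists_forall_mem_kerSub_eq_smul {T M : H →L[ℂ] H} (hMT : Commute M T) {w : ℂ}
    (hw : Module.finrank ℂ (kerSub T w) = 1) : ∃ c : ℂ, ∀ v ∈ kerSub T w, M v = c • v := by
  have hmaps : ∀ v ∈ kerSub T w, M v ∈ kerSub T w := fun v hv => by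
    rw [mem_kerSub_iff] at hv ⊢
    rw [← comp_apply, ← mul_def, ← hMT.eq, mul_def, comp_apply, hv, map_smul]
  obtain ⟨c, hc, -⟩ :=
    LinearMap.existsUnique_eq_smul_id_of_finrank_eq_one hw ((M : H →ₗ[ℂ] H).restrict hmaps)
  exact ⟨c, fun v hv => congrArg Subtype.val (LinearMap.congr_fun hc ⟨v, hv⟩)⟩

theorem ad_apply_eq_zero_of_mem_kerSub {T M : H →L[ℂ] H} (hM : Commute T (ad T M)) {w : ℂ}
    (hw : Module.finrank ℂ (kerSub T w) = 1) {v : H} (hv : v ∈ kerSub T w) : ad T M v = 0 := by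
  obtain ⟨c, hc⟩ := exists_forall_mem_kerSub_eq_smul hM.symm hw
  obtain ⟨u, hu, hu0⟩ := exists_ne_zero_mem_kerSub hw
  rw [hc v hv, eq_zero_of_ad_apply_eq_smul hM hu0 (hc u hu), zero_smul]

theorem ad_eq_zero_of_commute {Ω : Set ℂ} {T M : H →L[ℂ] H}
    (hdense : (⨆ w ∈ Ω, kerSub T w).topologicalClosure = ⊤)
    (hfin : ∀ w ∈ Ω, Module.finrank ℂ (kerSub T w) = 1) (hM : Commute T (ad T M)) :
    ad T M = 0 :=
  eq_zero_of_le_ker hdense <| iSup₂_le fun w hw _ hv =>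
    ad_apply_eq_zero_of_mem_kerSub hM (hfin w hw) hv

variable [CompleteSpace H]

open Filter Topology in
theorem eventually_exists_mem_kerSub_inner_ne_zero {T : H →L[ℂ] H} {w₀ : ℂ}
    (hsurj : Function.Surjective (T - w₀ • (1 : H →L[ℂ] H))) {u : H} (hu : u ∈ kerSub T w₀)
    (hu0 : u ≠ 0) : ∀ᶠ w in 𝓝 w₀, ∃ v ∈ kerSub T w, ⟪u, v⟫_ℂ ≠ 0 := by
  obtain ⟨R, hR⟩ := HasRightInverse.of_surjective hsurj
  have hR1 : (T - w₀ • (1 : H →L[ℂ] H)) * R = 1 := ext hR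
  set F : ℂ → H →L[ℂ] H := fun w => 1 - (w - w₀) • R
  -- `T - w = (T - w₀) (1 - (w - w₀) R)`, so `(1 - (w - w₀) R)⁻¹` maps `ker (T - w₀)`
  -- into `ker (T - w)` as long as it exists
  have hfactor : ∀ w, T - w • (1 : H →L[ℂ] H) = (T - w₀ • (1 : H →L[ℂ] H)) * F w := fun w => by
    rw [mul_sub, mul_one, mul_smul_comm, hR1, sub_smul]; abel
  have hF : Tendsto F (𝓝 w₀) (𝓝 1) := by
    have : Continuous F := by fun_prop
    simpa [F] using this.tendsto w₀
  set γ : ℂ → H := fun w => Ring.inverse (F w) u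
  have hγ : Tendsto γ (𝓝 w₀) (𝓝 u) := by
    have := ((NormedRing.inverse_continuousAt (1 : (H →L[ℂ] H)ˣ)).tendsto.comp hF)
    simpa [γ, Function.comp_def] using ((apply ℂ H u).continuous.tendsto _).comp this
  have hunit : ∀ᶠ w in 𝓝 w₀, IsUnit (F w) := hF.eventually (Units.isOpen.mem_nhds isUnit_one)
  have hinner : ∀ᶠ w in 𝓝 w₀, ⟪u, γ w⟫_ℂ ≠ 0 :=
    (tendsto_const_nhds.inner hγ).eventually_ne (inner_self_ne_zero.mpr hu0)
  filter_upwards [hunit, hinner] with w hw hw'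
  refine ⟨γ w, ?_, hw'⟩
  change (T - w • (1 : H →L[ℂ] H)) (Ring.inverse (F w) u) = 0
  rw [hfactor, ← mul_apply_eq_comp, mul_assoc, Ring.mul_inverse_cancel _ hw, mul_one]
  exact hu

theorem eq_of_isSelfAdjoint_of_inner_ne_zero {M : H →L[ℂ] H} (hM : IsSelfAdjoint M) {u v : H}
    {a b : ℂ} (hu : M u = a • u) (hv : M v = b • v) (huv : ⟪u, v⟫_ℂ ≠ 0) : a = b := by
  have hu0 : u ≠ 0 := by rintro rfl; simp at huv
  have hreal : (starRingEnd ℂ) a = a := by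
    have := hM.isSymmetric u u
    simp only [coe_coe, hu, inner_smul_left, inner_smul_right] at this
    exact mul_right_cancel₀ (inner_self_ne_zero.mpr hu0) this
  have := hM.isSymmetric u v
  simp only [coe_coe, hu, hv, inner_smul_left, inner_smul_right, hreal] at this
  exact mul_right_cancel₀ huv this

open Filter Topology in
theorem exists_eq_smul_one_of_isSelfAdjoint_of_commute {Ω : Set ℂ} (hΩ : IsConnected Ω)
    {T M : H →L[ℂ] H} (hT : CowenDouglas 1 Ω T) (hM : IsSelfAdjoint M) (hMT : Commute M T) :
    ∃ a : ℂ, M = a • 1 := by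
  obtain ⟨-, hsurj, hdense, hfin⟩ := hT
  choose! m hm using fun w (hw : w ∈ Ω) => exists_forall_mem_kerSub_eq_smul hMT (hfin w hw)
  -- eigenvectors of a self-adjoint operator for distinct eigenvalues are orthogonal
  have hloc : ∀ w ∈ Ω, ∀ᶠ w' in 𝓝[Ω] w, m w = m w' := fun w hw => by
    obtain ⟨u, hu, hu0⟩ := exists_ne_zero_mem_kerSub (hfin w hw)
    filter_upwards [self_mem_nhdsWithin, nhdsWithin_le_nhds
      (eventually_exists_mem_kerSub_inner_ne_zero (hsurj w hw) hu hu0)] with w' hw' ⟨v, hv, huv⟩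
    exact eq_of_isSelfAdjoint_of_inner_ne_zero hM (hm w hw u hu) (hm w' hw' v hv) huv
  obtain ⟨w₁, hw₁⟩ := hΩ.nonempty
  refine ⟨m w₁, sub_eq_zero.mp (eq_zero_of_le_ker hdense <| iSup₂_le fun w hw v hv => ?_)⟩
  have hconst : m w₁ = m w := hΩ.isPreconnected.induction₂ (fun w w' => m w = m w') hloc
    (fun _ _ _ _ _ _ => Eq.trans) (fun _ _ _ _ => Eq.symm) hw₁ hw
  simp [hm w hw v hv, hconst]

end KernelsOfShiftedOperator

theorem blocks_eq_of_commute {H₀ H₁ : Type*} [NormedAddCommGroup H₀] [InnerProductSpace ℂ H₀]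
    [CompleteSpace H₀] [NormedAddCommGroup H₁] [InnerProductSpace ℂ H₁] [CompleteSpace H₁]
    {Ω : Set ℂ} (hΩ : IsConnected Ω) {T₀ : H₀ →L[ℂ] H₀} {T₁ : H₁ →L[ℂ] H₁} {S : H₁ →L[ℂ] H₀}
    (h₀ : CowenDouglas 1 Ω T₀) (h₁ : CowenDouglas 1 Ω T₁) (hS : S ≠ 0)
    (hint : T₀ ∘L S = S ∘L T₁) {A : H₀ →L[ℂ] H₀} {B : H₁ →L[ℂ] H₀} {C : H₀ →L[ℂ] H₁}
    {D : H₁ →L[ℂ] H₁} (hA : IsSelfAdjoint A) (hD : IsSelfAdjoint D) (hC : C = adjoint B)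
    (hCT : C ∘L T₀ = T₁ ∘L C) (hAT : A ∘L T₀ = T₀ ∘L A + S ∘L C)
    (hDT : C ∘L S + D ∘L T₁ = T₁ ∘L D) (hBT : A ∘L S + B ∘L T₁ = T₀ ∘L B + S ∘L D)
    (hD2 : C ∘L B + D ∘L D = D) :
    ∃ a : ℂ, (a = 0 ∨ a = 1) ∧ A = a • 1 ∧ B = 0 ∧ C = 0 ∧ D = a • 1 := by
  have hadA : ad T₀ A = -(S ∘L C) := by
    rw [ad_apply, mul_def, mul_def, hAT]; abel
  have hadD : ad T₁ D = C ∘L S := by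
    rw [ad_apply, mul_def, mul_def, ← hDT]; abel
  have hcommSC : Commute T₀ (S ∘L C) := by
    change T₀ ∘L (S ∘L C) = (S ∘L C) ∘L T₀
    rw [← comp_assoc, hint, comp_assoc, ← hCT, comp_assoc]
  have hcommCS : Commute T₁ (C ∘L S) := by
    change T₁ ∘L (C ∘L S) = (C ∘L S) ∘L T₁
    rw [← comp_assoc, ← hCT, comp_assoc, hint, comp_assoc]
  have hA0 : ad T₀ A = 0 := ad_eq_zero_of_commute h₀.2.2.1 h₀.2.2.2 (hadA ▸ hcommSC.neg_right)
  have hD0 : ad T₁ D = 0 := ad_eq_zero_of_commute h₁.2.2.1 h₁.2.2.2 (hadD ▸ hcommCS)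
  have hSC : S ∘L C = 0 := neg_eq_zero.mp (hadA ▸ hA0)
  obtain ⟨a, rfl⟩ :=
    exists_eq_smul_one_of_isSelfAdjoint_of_commute hΩ h₀ hA (ad_eq_zero_iff_commute.mp hA0).symm
  obtain ⟨d, rfl⟩ :=
    exists_eq_smul_one_of_isSelfAdjoint_of_commute hΩ h₁ hD (ad_eq_zero_iff_commute.mp hD0).symm
  have hCB : C ∘L B = (d - d * d) • 1 := by
    rw [eq_sub_of_add_eq hD2, smul_comp, comp_smul, one_def, id_comp, smul_smul, sub_smul]
  have hd : d - d * d = 0 := by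
    have : (d - d * d) • S = 0 := by
      rw [← comp_id S, ← one_def, ← comp_smul, ← hCB, ← comp_assoc, hSC, zero_comp]
    exact (smul_eq_zero.mp this).resolve_right hS
  have hB : B = 0 := adjoint_comp_self_eq_zero_iff.mp (by rw [← hC, hCB, hd, zero_smul])
  have had : a = d := by
    simp only [hB, zero_comp, comp_zero, add_zero, zero_add, smul_comp, comp_smul, one_def,
      id_comp, comp_id] at hBT
    exact smul_left_injective ℂ hS hBT
  have hd01 : d = 0 ∨ d = 1 := (mul_eq_zero.mp (show d * (1 - d) = 0 by linear_combination hd)).imp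
    id fun h => (sub_eq_zero.mp h).symm
  exact ⟨d, hd01, had ▸ rfl, hB, by rw [hC, hB, map_zero], rfl⟩

section Blocks

variable {H₀ H₁ : Type*} [NormedAddCommGroup H₀] [InnerProductSpace ℂ H₀]
  [NormedAddCommGroup H₁] [InnerProductSpace ℂ H₁]
  (P : WithLp 2 (H₀ × H₁) →L[ℂ] WithLp 2 (H₀ × H₁))

def toLpInl : H₀ →L[ℂ] WithLp 2 (H₀ × H₁) :=
  (WithLp.prodContinuousLinearEquiv 2 ℂ H₀ H₁).symm.toContinuousLinearMap ∘L inl ℂ H₀ H₁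

def toLpInr : H₁ →L[ℂ] WithLp 2 (H₀ × H₁) :=
  (WithLp.prodContinuousLinearEquiv 2 ℂ H₀ H₁).symm.toContinuousLinearMap ∘L inr ℂ H₀ H₁

def block₀₀ : H₀ →L[ℂ] H₀ := WithLp.fstL 2 ℂ H₀ H₁ ∘L P ∘L toLpInl
def block₀₁ : H₁ →L[ℂ] H₀ := WithLp.fstL 2 ℂ H₀ H₁ ∘L P ∘L toLpInr
def block₁₀ : H₀ →L[ℂ] H₁ := WithLp.sndL 2 ℂ H₀ H₁ ∘L P ∘L toLpInl
def block₁₁ : H₁ →L[ℂ] H₁ := WithLp.sndL 2 ℂ H₀ H₁ ∘L P ∘L toLpInr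

theorem apply_eq_toLp_blocks (v : WithLp 2 (H₀ × H₁)) :
    P v = WithLp.toLp 2 (block₀₀ P v.fst + block₀₁ P v.snd, block₁₀ P v.fst + block₁₁ P v.snd) := by
  have : v = toLpInl v.fst + toLpInr v.snd := by
    simp [WithLp.ext_iff, Prod.ext_iff, toLpInl, toLpInr]
  conv_lhs => rw [this, map_add]
  simp [WithLp.ext_iff, Prod.ext_iff, block₀₀, block₀₁, block₁₀, block₁₁]

theorem blockOp₂_apply (T₀ : H₀ →L[ℂ] H₀) (S : H₁ →L[ℂ] H₀) (T₁ : H₁ →L[ℂ] H₁)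
    (v : WithLp 2 (H₀ × H₁)) :
    blockOp₂ T₀ S T₁ v = WithLp.toLp 2 (T₀ v.fst + S v.snd, T₁ v.snd) := rfl

variable {P}

theorem blocks_of_commute_blockOp₂ {T₀ : H₀ →L[ℂ] H₀} {S : H₁ →L[ℂ] H₀} {T₁ : H₁ →L[ℂ] H₁}
    (hcomm : P * blockOp₂ T₀ S T₁ = blockOp₂ T₀ S T₁ * P) :
    block₁₀ P ∘L T₀ = T₁ ∘L block₁₀ P ∧
    block₀₀ P ∘L T₀ = T₀ ∘L block₀₀ P + S ∘L block₁₀ P ∧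
    block₁₀ P ∘L S + block₁₁ P ∘L T₁ = T₁ ∘L block₁₁ P ∧
    block₀₀ P ∘L S + block₀₁ P ∘L T₁ = T₀ ∘L block₀₁ P + S ∘L block₁₁ P := by
  have key (v) : P (blockOp₂ T₀ S T₁ v) = blockOp₂ T₀ S T₁ (P v) := congr($hcomm v)
  simp only [apply_eq_toLp_blocks P, blockOp₂_apply, WithLp.ext_iff, Prod.ext_iff] at key
  have key₀ (x : H₀) := key (WithLp.toLp 2 (x, 0))
  have key₁ (y : H₁) := key (WithLp.toLp 2 (0, y))
  simp only [WithLp.toLp_fst, WithLp.toLp_snd, map_zero, add_zero, zero_add] at key₀ key₁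
  refine ⟨?_, ?_, ?_, ?_⟩ <;> ext
  · exact (key₀ _).2
  · exact (key₀ _).1
  · exact (key₁ _).2
  · exact (key₁ _).1

theorem block_idem (hP : P * P = P) :
    block₁₀ P ∘L block₀₁ P + block₁₁ P ∘L block₁₁ P = block₁₁ P := by
  have key (v) : P (P v) = P v := congr($hP v)
  simp only [apply_eq_toLp_blocks P, WithLp.ext_iff, Prod.ext_iff] at key
  ext y
  simpa using (key (WithLp.toLp 2 (0, y))).2

theorem blocks_of_isSelfAdjoint [CompleteSpace H₀] [CompleteSpace H₁] (hP : IsSelfAdjoint P) :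
    IsSelfAdjoint (block₀₀ P) ∧ IsSelfAdjoint (block₁₁ P) ∧ block₁₀ P = adjoint (block₀₁ P) := by
  have key (u v) : ⟪P u, v⟫_ℂ = ⟪u, P v⟫_ℂ := hP.isSymmetric u v
  simp only [WithLp.prod_inner_apply, apply_eq_toLp_blocks P] at key
  refine ⟨isSelfAdjoint_iff_isSymmetric.mpr fun x x' => ?_,
    isSelfAdjoint_iff_isSymmetric.mpr fun y y' => ?_, (eq_adjoint_iff _ _).mpr fun x y => ?_⟩
  · simpa using key (WithLp.toLp 2 (x, 0)) (WithLp.toLp 2 (x', 0))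
  · simpa using key (WithLp.toLp 2 (0, y)) (WithLp.toLp 2 (0, y'))
  · simpa using key (WithLp.toLp 2 (x, 0)) (WithLp.toLp 2 (0, y))

end Blocks

theorem statement11_general
    {H₀ H₁ : Type*}
    [NormedAddCommGroup H₀] [InnerProductSpace ℂ H₀] [CompleteSpace H₀]
    [NormedAddCommGroup H₁] [InnerProductSpace ℂ H₁] [CompleteSpace H₁]
    (Ω : Set ℂ) (hΩconn : IsConnected Ω)
    (T₀ : H₀ →L[ℂ] H₀) (T₁ : H₁ →L[ℂ] H₁) (S : H₁ →L[ℂ] H₀)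
    (h₀ : CowenDouglas 1 Ω T₀) (h₁ : CowenDouglas 1 Ω T₁)
    (hS : S ≠ 0) (hint : T₀ ∘L S = S ∘L T₁) :
    ∀ P : WithLp 2 (H₀ × H₁) →L[ℂ] WithLp 2 (H₀ × H₁),
      P * P = P → IsSelfAdjoint P →
      P * blockOp₂ T₀ S T₁ = blockOp₂ T₀ S T₁ * P →
      P = 0 ∨ P = 1 := by
  intro P hP2 hPsa hPcomm
  obtain ⟨hCT, hAT, hDT, hBT⟩ := blocks_of_commute_blockOp₂ hPcomm
  obtain ⟨hA, hD, hC⟩ := blocks_of_isSelfAdjoint hPsa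
  obtain ⟨a, ha, hA', hB', hC', hD'⟩ :=
    blocks_eq_of_commute hΩconn h₀ h₁ hS hint hA hD hC hCT hAT hDT hBT (block_idem hP2)
  have hPa (v) : P v = a • v := by
    rw [apply_eq_toLp_blocks P, hA', hB', hC', hD']
    simp [WithLp.ext_iff, Prod.ext_iff]
  rcases ha with rfl | rfl
  · exact Or.inl (ext fun v => by rw [hPa, zero_smul, zero_apply])
  · exact Or.inr (ext fun v => by rw [hPa, one_smul]; rfl)

/-- Every operator in `𝓕B₂(Ω)` is irreducible: the only orthogonal projections commuting
with it are `0` and `1`. -/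
theorem statement11
    {H₀ H₁ : Type*}
    [NormedAddCommGroup H₀] [InnerProductSpace ℂ H₀] [CompleteSpace H₀]
    [TopologicalSpace.SeparableSpace H₀]
    [NormedAddCommGroup H₁] [InnerProductSpace ℂ H₁] [CompleteSpace H₁]
    [TopologicalSpace.SeparableSpace H₁]
    (Ω : Set ℂ) (hΩopen : IsOpen Ω) (hΩconn : IsConnected Ω)
    (T₀ : H₀ →L[ℂ] H₀) (T₁ : H₁ →L[ℂ] H₁) (S : H₁ →L[ℂ] H₀)
    (h₀ : CowenDouglas 1 Ω T₀) (h₁ : CowenDouglas 1 Ω T₁)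
    (hS : S ≠ 0) (hint : T₀ ∘L S = S ∘L T₁) :
    ∀ P : WithLp 2 (H₀ × H₁) →L[ℂ] WithLp 2 (H₀ × H₁),
      P * P = P → IsSelfAdjoint P →
      P * blockOp₂ T₀ S T₁ = blockOp₂ T₀ S T₁ * P →
      P = 0 ∨ P = 1 :=
  statement11_general Ω hΩconn T₀ T₁ S h₀ h₁ hS hint
end
end
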